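/- arXiv:1406.0573 — 4 statements merged into one kernel-verified Lean document; each statement's English description precedes it below -/
import Mathlib

section
/- For q a prime power with q ≡ 1 mod 4, and f, g monic polynomials in F_q[t], the quadratic residue symbols satisfy reciprocity: (f/g) = (g/f). -/
open Polynomial UniqueFactorizationMonoid

/-- The quadratic residue symbol `(g/p)` for `p` a monic prime of `F_q[t]`:
`0` if `p ∣ g`, `1` if `g` is a nonzero square modulo `p`, `-1` otherwise. -/
noncomputable def legSym (F : Type*) [Field F] [Fintype F] (p g : Polynomial F) : ℤ :=
  letI := Classical.propDecidable (p ∣ g)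
  letI := Classical.propDecidable (∃ h : Polynomial F, p ∣ g - h ^ 2)
  if p ∣ g then 0 else if ∃ h : Polynomial F, p ∣ g - h ^ 2 then 1 else -1

/-- The quadratic residue symbol `(g/f)`, extended multiplicatively over the (monic) prime
factorization of `f`. -/
noncomputable def resSym (F : Type*) [Field F] [Fintype F] (f g : Polynomial F) : ℤ :=
  ((UniqueFactorizationMonoid.factors f).map fun p => legSym F p g).prod

/-!
For monic `f`, the symbol `(g/f)` equals `χ (Res(f, g))`, where `χ` is the quadratic character
of `F`. For a monic prime `p`, Euler's criterion in `F[t]/p` and in `F`, linked by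
`N(x) = x ^ ((q ^ deg p - 1) / (q - 1))`, give `(g/p) = χ (N(g mod p))`, and the norm from
`F[t]/p` to `F` is `Res(p, g)`, the product of `g` over the roots of `p`. Both sides are
multiplicative in `f`. Reciprocity is then `Res(g, f) = (-1) ^ (deg f * deg g) * Res(f, g)`
together with `χ (-1) = 1` for `q ≡ 1 mod 4`.
-/

theorem Nat.pow_sub_one_div_sub_one_mul_div_two {q : ℕ} (hq : Odd q) (n : ℕ) :
    (q ^ n - 1) / (q - 1) * (q / 2) = q ^ n / 2 := by
  obtain ⟨m, hm⟩ := Nat.sub_one_dvd_pow_sub_one q n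
  obtain ⟨k, rfl⟩ := hq
  obtain ⟨j, hj⟩ := (odd_two_mul_add_one k).pow (n := n)
  rw [hj, Nat.add_sub_cancel, Nat.add_sub_cancel] at hm
  rcases Nat.eq_zero_or_pos k with rfl | hk
  · simp
  have hk2 : (2 * k + 1) / 2 = k := by omega
  have hj2 : (2 * j + 1) / 2 = j := by omega
  rw [hj, Nat.add_sub_cancel, Nat.add_sub_cancel, hj2, hk2, hm,
    Nat.mul_div_cancel_left _ (by omega)]
  linarith

theorem AdjoinRoot.isSquare_mk_iff {R : Type*} [CommRing R] {p g : R[X]} :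
    IsSquare (mk p g) ↔ ∃ h, p ∣ g - h ^ 2 := by
  constructor
  · rintro ⟨r, hr⟩
    obtain ⟨h, rfl⟩ := mk_surjective r
    exact ⟨h, mk_eq_zero.mp (by rw [map_sub, map_pow, hr, sq, sub_self])⟩
  · rintro ⟨h, hh⟩
    exact ⟨mk p h, by rw [← sq, ← map_pow, ← sub_eq_zero, ← map_sub, mk_eq_zero]; exact hh⟩

theorem Polynomial.resultant_multiset_prod_left {R : Type*} [CommRing R] (s : Multiset R[X])
    (hs : ∀ f ∈ s, f.Monic) (g : R[X]) :
    s.prod.resultant g = (s.map (·.resultant g)).prod := by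
  induction s using Multiset.induction with
  | empty => simp
  | cons a s ih =>
    simp only [Multiset.mem_cons, forall_eq_or_imp] at hs
    have hprod : s.prod.Monic := by
      simpa using monic_multiset_prod_of_monic s id hs.2
    rw [Multiset.prod_cons, Multiset.map_cons, Multiset.prod_cons, ← ih hs.2,
      hs.1.natDegree_mul hprod, resultant_mul_left _ _ _ _ le_rfl]

theorem quadraticChar_algebraNorm {K L : Type*} [Field K] [Fintype K] [DecidableEq K] [Field L]
    [Fintype L] [DecidableEq L] [Algebra K L] (hK : ringChar K ≠ 2) (x : L) :
    quadraticChar K (Algebra.norm K x) = quadraticChar L x := by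
  have hL : ringChar L ≠ 2 := by rwa [← Algebra.ringChar_eq K L]
  have hexp : (Nat.card L - 1) / (Nat.card K - 1) * (Fintype.card K / 2)
      = Fintype.card L / 2 := by
    rw [Nat.card_eq_fintype_card, Nat.card_eq_fintype_card, Module.card_eq_pow_finrank (K := K)]
    exact Nat.pow_sub_one_div_sub_one_mul_div_two
      (Nat.odd_iff.mpr (FiniteField.odd_card_of_char_ne_two hK)) _
  apply (quadraticChar_isQuadratic K).eq_of_eq_coe (quadraticChar_isQuadratic L) hL
  rw [quadraticChar_eq_pow_of_char_ne_two' hL, ← map_intCast (algebraMap K L),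
    quadraticChar_eq_pow_of_char_ne_two' hK, map_pow, FiniteField.algebraMap_norm_eq_pow,
    ← pow_mul, hexp]

theorem AdjoinRoot.norm_mk_eq_resultant {F : Type*} [Field F] [PerfectField F] {p : F[X]}
    [hirr : Fact (Irreducible p)] (hp : p.Monic) (g : F[X]) :
    Algebra.norm F (AdjoinRoot.mk p g) = p.resultant g := by
  classical
  have : Module.Finite F (AdjoinRoot p) := (AdjoinRoot.powerBasis hp.ne_zero).finite
  let Ω := AlgebraicClosure F
  have hroots : (p.aroots Ω).Nodup :=
    nodup_roots (PerfectField.separable_of_irreducible hirr.out).map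
  apply (algebraMap F Ω).injective
  rw [Algebra.norm_eq_prod_embeddings F Ω, ← resultant_map_map, ← natDegree_map (algebraMap F Ω),
    resultant_eq_prod_eval _ _ _ natDegree_map_le (IsAlgClosed.splits _), (hp.map _).leadingCoeff,
    one_pow, one_mul,
    Fintype.prod_equiv (AdjoinRoot.equiv Ω F p hp.ne_zero) _ (fun x => aeval x.1 g),
    Finset.prod_mem_multiset _ _ (fun x => aeval x g) (fun _ => rfl),
    Finset.prod_eq_multiset_prod, Multiset.toFinset_val, Multiset.dedup_eq_self.mpr hroots]
  · simp [aroots_def, eval_map_algebraMap]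
  · intro σ
    rw [← AdjoinRoot.aeval_eq, ← aeval_algHom_apply]
    rfl

section

variable {F : Type*} [Field F] [Fintype F]

theorem legSym_eq_quadraticChar_adjoinRoot {p : F[X]} [Fact (Irreducible p)]
    [Fintype (AdjoinRoot p)] [DecidableEq (AdjoinRoot p)] (g : F[X]) :
    legSym F p g = quadraticChar (AdjoinRoot p) (AdjoinRoot.mk p g) := by
  classical
  rw [legSym, quadraticChar_apply, quadraticCharFun]
  exact if_congr AdjoinRoot.mk_eq_zero.symm rfl (if_congr AdjoinRoot.isSquare_mk_iff.symm rfl rfl)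

theorem legSym_eq_quadraticChar_resultant [DecidableEq F] (hF : ringChar F ≠ 2) {p : F[X]}
    (hp : Irreducible p) (hpm : p.Monic) (g : F[X]) :
    legSym F p g = quadraticChar F (p.resultant g) := by
  classical
  have := Fact.mk hp
  have : Module.Finite F (AdjoinRoot p) := (AdjoinRoot.powerBasis hp.ne_zero).finite
  have : Finite (AdjoinRoot p) := Module.finite_of_finite F
  let : Fintype (AdjoinRoot p) := Fintype.ofFinite _
  rw [legSym_eq_quadraticChar_adjoinRoot, ← quadraticChar_algebraNorm hF,
    AdjoinRoot.norm_mk_eq_resultant hpm]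

theorem legSym_eq_of_associated {p p' : F[X]} (h : Associated p p') (g : F[X]) :
    legSym F p g = legSym F p' g := by
  classical
  rw [legSym, legSym]
  exact if_congr h.dvd_iff_dvd_left rfl
    (if_congr (exists_congr fun _ => h.dvd_iff_dvd_left) rfl rfl)

theorem resSym_eq_quadraticChar_resultant [DecidableEq F] (hF : ringChar F ≠ 2) {f : F[X]}
    (hf : f.Monic) (g : F[X]) :
    resSym F f g = quadraticChar F (f.resultant g) := by
  have hfactors (p) (hp : p ∈ normalizedFactors f) : Irreducible p ∧ p.Monic :=
    have hirr := irreducible_of_normalized_factor p hp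
    ⟨hirr, normalize_normalized_factor p hp ▸ monic_normalize hirr.ne_zero⟩
  calc resSym F f g = ((normalizedFactors f).map (legSym F · g)).prod := by
        rw [resSym, normalizedFactors, Multiset.map_map]
        exact congrArg _ (Multiset.map_congr rfl fun p _ =>
          legSym_eq_of_associated (associated_normalize p) g)
    _ = ((normalizedFactors f).map (quadraticChar F ∘ (·.resultant g))).prod := by
        refine congrArg _ (Multiset.map_congr rfl fun p hp => ?_)
        exact legSym_eq_quadraticChar_resultant hF (hfactors p hp).1 (hfactors p hp).2 g
    _ = quadraticChar F ((normalizedFactors f).prod.resultant g) := by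
        rw [resultant_multiset_prod_left _ (fun p hp => (hfactors p hp).2), map_multiset_prod,
          Multiset.map_map]
    _ = quadraticChar F (f.resultant g) := by
        rw [prod_normalizedFactors_eq hf.ne_zero, hf.normalize_eq_self]

end

/-- Quadratic reciprocity over `F_q[t]` for `q ≡ 1 mod 4`: for monic `f, g` we have
`(f/g) = (g/f)`. -/
theorem quadratic_reciprocity_function_field (F : Type*) [Field F] [Fintype F]
    (hq : Fintype.card F % 4 = 1) (f g : Polynomial F) (hf : f.Monic) (hg : g.Monic) :
    resSym F g f = resSym F f g := by
  classical
  have hF : ringChar F ≠ 2 := fun h => by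
    have := FiniteField.even_card_of_char_two h
    omega
  have hχ : quadraticChar F (-1) = 1 :=
    (quadraticChar_one_iff_isSquare (neg_ne_zero.mpr one_ne_zero)).mpr
      (FiniteField.isSquare_neg_one_iff.mpr (by omega))
  rw [resSym_eq_quadraticChar_resultant hF hg, resSym_eq_quadraticChar_resultant hF hf,
    resultant_comm, map_mul, map_pow, hχ, one_pow, one_mul]
end

section
/- Suppose a power series Z(x_1,...,x_{n+1}) = Σ c_{a_1,...,a_{n+1}} x^{a} satisfies the coefficient recurrences: c_{...,a_i,...} = q^{a_i - (A(i)-1)/2} c_{...,A(i)-1-a_i,...} when A(i) := Σ_{j∼i} a_j is odd, and c_{...,a_i,...} - q·c_{...,a_i-1,...} = q^{a_i - A(i)/2}(c_{...,A(i)-a_i,...} - q·c_{...,A(i)-a_i-1,...}) when A(i) is even, for all i (coefficients with a negative index being 0). If the Dynkin diagram Γ is of finite type, then Z is uniquely determined by c_{0,...,0}; i.e., if two such series have the same constant coefficient, they are equal. -/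
/-- `nbrSum G a i = A(i) = Σ_{j∼i} a_j`. -/
def nbrSum {m : ℕ} (G : SimpleGraph (Fin m)) [DecidableRel G.Adj] (a : Fin m → ℤ)
    (i : Fin m) : ℤ :=
  ∑ j ∈ Finset.univ.filter (fun j => G.Adj i j), a j

/-- The coefficient recurrences induced by the functional equations: coefficients with a
negative index vanish; if `A(i)` is odd then
`c_{...,a_i,...} = q^{a_i - (A(i)-1)/2} c_{...,A(i)-1-a_i,...}`, and if `A(i)` is even then
`c_{...,a_i,...} - q·c_{...,a_i-1,...}
  = q^{a_i - A(i)/2}(c_{...,A(i)-a_i,...} - q·c_{...,A(i)-a_i-1,...})`. -/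
def SatisfiesRecurrences {m : ℕ} (G : SimpleGraph (Fin m)) [DecidableRel G.Adj] (q : ℂ)
    (c : (Fin m → ℤ) → ℂ) : Prop :=
  (∀ a : Fin m → ℤ, (∃ i, a i < 0) → c a = 0) ∧
  (∀ (a : Fin m → ℤ) (i : Fin m),
    (Odd (nbrSum G a i) →
      c a = q ^ (a i - (nbrSum G a i - 1) / 2) *
        c (Function.update a i (nbrSum G a i - 1 - a i))) ∧
    (Even (nbrSum G a i) →
      c a - q * c (Function.update a i (a i - 1)) =
        q ^ (a i - nbrSum G a i / 2) *
          (c (Function.update a i (nbrSum G a i - a i)) -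
            q * c (Function.update a i (nbrSum G a i - a i - 1)))))

/-- If the Dynkin diagram is of finite type (encoded by the key fact: every nonzero tuple of
nonnegative indices admits `i` with `a_i > A(i)/2`), then a power series satisfying the
coefficient recurrences is uniquely determined by its constant coefficient. -/
theorem finite_type_uniqueness {m : ℕ} (G : SimpleGraph (Fin m)) [DecidableRel G.Adj]
    (q : ℂ)
    (hfinite : ∀ a : Fin m → ℤ, (∀ i, 0 ≤ a i) → a ≠ 0 → ∃ i, nbrSum G a i < 2 * a i)
    (c c' : (Fin m → ℤ) → ℂ)
    (hc : SatisfiesRecurrences G q c) (hc' : SatisfiesRecurrences G q c')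
    (h0 : c 0 = c' 0) :
    ∀ a : Fin m → ℤ, c a = c' a := by
  suffices H : ∀ N : ℕ, ∀ a : Fin m → ℤ, (∀ i, 0 ≤ a i) → (∑ i, a i) = N → c a = c' a by
    intro a
    by_cases hneg : ∃ i, a i < 0
    · rw [hc.1 a hneg, hc'.1 a hneg]
    · push_neg at hneg
      exact H (∑ i, a i).toNat a hneg
        (Int.toNat_of_nonneg (Finset.sum_nonneg fun i _ => hneg i)).symm
  intro N
  induction N using Nat.strong_induction_on with
  | _ N IH =>
    intro a ha hsum
    by_cases h0a : a = 0
    · subst h0a; exact h0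
    · obtain ⟨i, hi⟩ := hfinite a ha h0a
      set A := nbrSum G a i with hA
      have hA0 : 0 ≤ A := Finset.sum_nonneg fun j _ => ha j
      have hai : a i ≤ (N : ℤ) := by
        rw [← hsum]
        exact Finset.single_le_sum (fun j _ => ha j) (Finset.mem_univ i)
      have key : ∀ x : ℤ, x < a i →
          c (Function.update a i x) = c' (Function.update a i x) := by
        intro x hx
        by_cases hx0 : 0 ≤ x
        · have ha' : ∀ j, 0 ≤ Function.update a i x j := by
            intro j
            rcases eq_or_ne j i with rfl | h
            · simpa using hx0
            · simpa [Function.update_of_ne h] using ha j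
          have hsplit : ∑ j, Function.update a i x j = (N : ℤ) - a i + x := by
            rw [Finset.sum_update_of_mem (Finset.mem_univ i)]
            have : ∑ j ∈ Finset.univ \ {i}, a j = (∑ j, a j) - a i := by
              rw [Finset.sum_sdiff_eq_sub (Finset.singleton_subset_iff.2 (Finset.mem_univ i))]
              simp
            rw [this, hsum]; ring
          have hS0 : (0 : ℤ) ≤ ∑ j, Function.update a i x j :=
            Finset.sum_nonneg fun j _ => ha' j
          refine IH (∑ j, Function.update a i x j).toNat ?_ _ ha'
            (Int.toNat_of_nonneg hS0).symm
          omega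
        · push_neg at hx0
          have hneg : ∃ j, Function.update a i x j < 0 := ⟨i, by simpa using hx0⟩
          rw [hc.1 _ hneg, hc'.1 _ hneg]
      rcases Int.even_or_odd A with hev | hodd
      · have e1 := (hc.2 a i).2 hev
        have e2 := (hc'.2 a i).2 hev
        rw [← hA] at e1 e2
        have h1 := key (a i - 1) (by omega)
        have h2 := key (A - a i) (by omega)
        have h3 := key (A - a i - 1) (by omega)
        linear_combination e1 - e2 + q * h1 + q ^ (a i - A / 2) * h2 -
          q ^ (a i - A / 2) * q * h3
      · have e1 := (hc.2 a i).1 hodd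
        have e2 := (hc'.2 a i).1 hodd
        rw [← hA] at e1 e2
        have h2 := key (A - 1 - a i) (by omega)
        rw [e1, e2, h2]
end

section
/- Let δ be a partition with parts d^{(1)} ≥ d^{(2)} ≥ ... ≥ 0. There is a unique strictly decreasing partition γ such that δ − γ* has all parts even and is itself a partition (nonincreasing, nonnegative); namely γ is the set {j : d^{(j)} is odd} listed in decreasing order, and γ* is its conjugate. -/
/-- The conjugate partition of a strict partition, viewed as a finset `S` of positive parts:
its `j`-th part (0-indexed) is `#{s ∈ S | s > j}`. -/
def conjOfStrict (S : Finset ℕ) (j : ℕ) : ℕ :=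
  (S.filter fun s => j < s).card

lemma conj_succ (S : Finset ℕ) (j : ℕ) :
    conjOfStrict S j = conjOfStrict S (j + 1) + (if j + 1 ∈ S then 1 else 0) := by
  classical
  unfold conjOfStrict
  have h1 : (S.filter fun s => j < s) =
      (S.filter fun s => j + 1 < s) ∪ (S.filter fun s => s = j + 1) := by
    ext s
    simp only [Finset.mem_filter, Finset.mem_union]
    constructor
    · rintro ⟨hs, h⟩
      rcases Nat.lt_or_ge (j + 1) s with h' | h'
      · exact Or.inl ⟨hs, h'⟩
      · exact Or.inr ⟨hs, by omega⟩
    · rintro (⟨hs, h⟩ | ⟨hs, h⟩) <;> exact ⟨hs, by omega⟩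
  rw [h1, Finset.card_union_of_disjoint]
  · congr 1
    rw [Finset.filter_eq']
    split <;> simp
  · rw [Finset.disjoint_left]
    intro a ha hb
    simp only [Finset.mem_filter] at ha hb
    omega

lemma mem_char (d : ℕ → ℕ) (S : Finset ℕ) (hpos : ∀ s ∈ S, 0 < s)
    (hle : ∀ j, conjOfStrict S j ≤ d j) (heven : ∀ j, Even (d j - conjOfStrict S j)) :
    ∀ k, k ∈ S ↔ 0 < k ∧ (d (k - 1) + d k) % 2 = 1 := by
  have hpar : ∀ j, conjOfStrict S j % 2 = d j % 2 := by
    intro j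
    have h1 := hle j
    have h2 := heven j
    rw [Nat.even_iff] at h2
    omega
  intro k
  constructor
  · intro hk
    have hk0 := hpos k hk
    refine ⟨hk0, ?_⟩
    obtain ⟨j, rfl⟩ : ∃ j, k = j + 1 := ⟨k - 1, by omega⟩
    have hs := conj_succ S j
    rw [if_pos hk] at hs
    have p1 := hpar j
    have p2 := hpar (j + 1)
    simp only [Nat.add_sub_cancel]
    omega
  · rintro ⟨hk0, hodd⟩
    obtain ⟨j, rfl⟩ : ∃ j, k = j + 1 := ⟨k - 1, by omega⟩
    have hs := conj_succ S j
    by_contra h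
    rw [if_neg h] at hs
    have p1 := hpar j
    have p2 := hpar (j + 1)
    simp only [Nat.add_sub_cancel] at hodd
    omega

/-- Given a partition `δ` with parts `d 0 ≥ d 1 ≥ ⋯ ≥ 0` (eventually zero), there is a
unique strictly decreasing partition `γ` (a finset of positive parts) such that `δ − γ*` is
a partition all of whose parts are even; `γ` is the set `{j : d^{(j)} odd}`. -/
theorem unique_strict_partition_decomposition (d : ℕ → ℕ)
    (hant : Antitone d) (hfin : ∃ N, ∀ j, N ≤ j → d j = 0) :
    ∃! S : Finset ℕ, (∀ s ∈ S, 0 < s) ∧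
      (∀ j, conjOfStrict S j ≤ d j) ∧
      (∀ j, Even (d j - conjOfStrict S j)) ∧
      Antitone (fun j => d j - conjOfStrict S j) := by
  classical
  obtain ⟨N, hN⟩ := hfin
  set S₀ : Finset ℕ :=
    (Finset.range (N + 1)).filter (fun k => 0 < k ∧ (d (k - 1) + d k) % 2 = 1) with hS₀
  have hmem : ∀ k, k ∈ S₀ ↔ 0 < k ∧ (d (k - 1) + d k) % 2 = 1 := by
    intro k
    rw [hS₀, Finset.mem_filter, Finset.mem_range]
    constructor
    · rintro ⟨_, h⟩; exact h
    · rintro ⟨h1, h2⟩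
      refine ⟨?_, h1, h2⟩
      by_contra hbig
      push_neg at hbig
      have e1 : d (k - 1) = 0 := hN _ (by omega)
      have e2 : d k = 0 := hN _ (by omega)
      omega
  have key : ∀ m j, N ≤ j + m →
      conjOfStrict S₀ j ≤ d j ∧ (d j - conjOfStrict S₀ j) % 2 = 0 := by
    intro m
    induction m with
    | zero =>
      intro j hj
      have hz : conjOfStrict S₀ j = 0 := by
        unfold conjOfStrict
        rw [Finset.card_eq_zero, Finset.filter_eq_empty_iff]
        intro s hs
        rw [hS₀, Finset.mem_filter, Finset.mem_range] at hs
        omega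
      have := hN j (by omega)
      omega
    | succ m ih =>
      intro j hj
      have ihj := ih (j + 1) (by omega)
      have hs := conj_succ S₀ j
      have hmono : d (j + 1) ≤ d j := hant (Nat.le_succ j)
      by_cases hc : (d j + d (j + 1)) % 2 = 1
      · have hin : j + 1 ∈ S₀ := by
          rw [hmem]
          simp only [Nat.add_sub_cancel]
          omega
        rw [if_pos hin] at hs
        omega
      · have hout : j + 1 ∉ S₀ := by
          rw [hmem]
          simp only [Nat.add_sub_cancel]
          omega
        rw [if_neg hout] at hs
        omega
  have hkey : ∀ j, conjOfStrict S₀ j ≤ d j ∧ (d j - conjOfStrict S₀ j) % 2 = 0 :=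
    fun j => key N j (by omega)
  refine ⟨S₀, ⟨fun s hs => ((hmem s).mp hs).1, fun j => (hkey j).1,
    fun j => Nat.even_iff.mpr (hkey j).2, ?_⟩, ?_⟩
  · apply antitone_nat_of_succ_le
    intro j
    show d (j + 1) - conjOfStrict S₀ (j + 1) ≤ d j - conjOfStrict S₀ j
    have hs := conj_succ S₀ j
    have h1 := hkey j
    have h2 := hkey (j + 1)
    have hmono : d (j + 1) ≤ d j := hant (Nat.le_succ j)
    split_ifs at hs with h
    · have hp := (hmem (j + 1)).mp h
      simp only [Nat.add_sub_cancel] at hp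
      omega
    · omega
  · intro S hS
    obtain ⟨hpos, hle, hev, _⟩ := hS
    have hc := mem_char d S hpos hle hev
    ext k
    rw [hc k, hmem k]
end

section
/- Fix N ≥ 1 and 1 ≤ k ≤ N. Every partition δ̃ can be written uniquely as Σ_{k=1}^{N} δ̃_k* where each δ̃_k is a partition all of whose parts are congruent to k modulo N; the multiplicity of the part k' ≡ k (mod N) in δ̃_k equals d^{(k')} − d^{(k'+1)} where d^{(j)} are the parts of δ̃. -/
/-- The `j`-th part (1-indexed) of the conjugate of the partition whose parts are the
multiset `M`: `#{p ∈ M | p ≥ j}` counted with multiplicity. -/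
def conjPart (M : Multiset ℕ) (j : ℕ) : ℕ :=
  (M.filter fun p => j ≤ p).card

lemma conjPart_sum {ι : Type*} (s : Finset ι) (m : ι → Multiset ℕ) (j : ℕ) :
    conjPart (∑ x ∈ s, m x) j = ∑ x ∈ s, conjPart (m x) j := by
  classical
  induction s using Finset.cons_induction with
  | empty => simp [conjPart]
  | cons a s ha ih =>
    rw [Finset.sum_cons, Finset.sum_cons, ← ih]
    simp [conjPart, Multiset.filter_add]

lemma conjPart_replicate (n a j : ℕ) :
    conjPart (Multiset.replicate n a) j = if j ≤ a then n else 0 := by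
  unfold conjPart
  by_cases h : j ≤ a
  · rw [if_pos h, Multiset.filter_eq_self.mpr, Multiset.card_replicate]
    intro b hb
    rw [Multiset.eq_of_mem_replicate hb]; exact h
  · rw [if_neg h, Multiset.filter_eq_nil.mpr, Multiset.card_zero]
    intro b hb
    rw [Multiset.eq_of_mem_replicate hb]; exact h

lemma conjPart_succ_add (M : Multiset ℕ) (a : ℕ) :
    conjPart M a = conjPart M (a + 1) + M.count a := by
  induction M using Multiset.induction with
  | empty => simp [conjPart]
  | cons b M ih =>
    simp only [conjPart, Multiset.filter_cons, Multiset.card_add, Multiset.count_cons,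
      apply_ite Multiset.card, Multiset.card_singleton, Multiset.card_zero] at ih ⊢
    split_ifs <;> omega

lemma telescope_aux (d : ℕ → ℕ) (mono : ∀ a b, 1 ≤ a → a ≤ b → d b ≤ d a) (j : ℕ) (hj : 1 ≤ j) :
    ∀ M, ∑ k' ∈ Finset.Icc j M, (d k' - d (k' + 1)) = d j - d (M + 1) := by
  intro M
  induction M with
  | zero =>
    rw [Finset.Icc_eq_empty (by omega), Finset.sum_empty]
    simp only [Nat.zero_add]
    have := mono 1 j le_rfl hj
    omega
  | succ M ih =>
    by_cases h : j ≤ M + 1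
    · rw [Finset.sum_Icc_succ_top h, ih]
      simp only [show M + 1 + 1 = M + 2 from rfl]
      have h1 : d (M + 2) ≤ d (M + 1) := mono (M + 1) (M + 2) (by omega) (by omega)
      have h2 : d (M + 1) ≤ d j := mono j (M + 1) hj h
      omega
    · rw [Finset.Icc_eq_empty h, Finset.sum_empty]
      simp only [show M + 1 + 1 = M + 2 from rfl]
      have := mono (M + 2) j (by omega) (by omega)
      omega

/-- Fix `N ≥ 1`.  Every partition `δ̃` (with parts `d 1 ≥ d 2 ≥ ⋯`, eventually zero) can be
written uniquely as `Σ_{k=1}^{N} δ̃_k*` where each `δ̃_k` is a partition all of whose parts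
are congruent to `k` modulo `N`; the multiplicity of the part `k' ≡ k (mod N)` in `δ̃_k`
equals `d^{(k')} − d^{(k'+1)}`. -/
theorem unique_modular_conjugate_decomposition (N : ℕ) (hN : 1 ≤ N)
    (d : ℕ → ℕ) (hant : ∀ j, 1 ≤ j → d (j + 1) ≤ d j)
    (hfin : ∃ M, ∀ j, M ≤ j → d j = 0) :
    ∃ f : Fin N → Multiset ℕ,
      ((∀ k, ∀ p ∈ f k, 0 < p ∧ p % N = ((k : ℕ) + 1) % N) ∧
        (∀ j, 1 ≤ j → d j = ∑ k : Fin N, conjPart (f k) j)) ∧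
      (∀ (k : Fin N) (k' : ℕ), 0 < k' → k' % N = ((k : ℕ) + 1) % N →
        (f k).count k' = d k' - d (k' + 1)) ∧
      (∀ g : Fin N → Multiset ℕ,
        ((∀ k, ∀ p ∈ g k, 0 < p ∧ p % N = ((k : ℕ) + 1) % N) ∧
          (∀ j, 1 ≤ j → d j = ∑ k : Fin N, conjPart (g k) j)) → g = f) := by
  classical
  obtain ⟨M, hM⟩ := hfin
  -- monotonicity
  have mono : ∀ a b, 1 ≤ a → a ≤ b → d b ≤ d a := by
    intro a b ha hab
    induction b with
    | zero => omega
    | succ b ih =>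
      rcases Nat.lt_or_ge a (b + 1) with h | h
      · exact le_trans (hant b (by omega)) (ih (by omega))
      · have : a = b + 1 := by omega
        rw [this]
  -- injectivity of k ↦ (k+1) % N on Fin N
  have inj : ∀ a b : ℕ, a < N → b < N → (a + 1) % N = (b + 1) % N → a = b := by
    intro a b ha hb h
    rcases Nat.lt_or_ge (a + 1) N with h1 | h1 <;> rcases Nat.lt_or_ge (b + 1) N with h2 | h2
    · rw [Nat.mod_eq_of_lt h1, Nat.mod_eq_of_lt h2] at h; omega
    · have : b + 1 = N := by omega
      rw [Nat.mod_eq_of_lt h1, this, Nat.mod_self] at h; omega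
    · have : a + 1 = N := by omega
      rw [Nat.mod_eq_of_lt h2, this, Nat.mod_self] at h; omega
    · have ha' : a + 1 = N := by omega
      have hb' : b + 1 = N := by omega
      omega
  set f : Fin N → Multiset ℕ := fun k =>
    ∑ k' ∈ Finset.Ioc 0 M,
      if k' % N = ((k : ℕ) + 1) % N then Multiset.replicate (d k' - d (k' + 1)) k' else 0
    with hf
  -- membership property of f
  have hmem : ∀ k : Fin N, ∀ p ∈ f k, 0 < p ∧ p % N = ((k : ℕ) + 1) % N := by
    intro k p hp
    rw [hf, Multiset.mem_sum] at hp
    obtain ⟨k', hk', hpk'⟩ := hp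
    split_ifs at hpk' with hc
    · rw [Multiset.eq_of_mem_replicate hpk']
      exact ⟨(Finset.mem_Ioc.mp hk').1, hc⟩
    · simp at hpk'
  -- count property of f
  have hcount : ∀ (k : Fin N) (k' : ℕ), 0 < k' → k' % N = ((k : ℕ) + 1) % N →
      (f k).count k' = d k' - d (k' + 1) := by
    intro k k' hk'pos hk'mod
    rw [hf]
    simp only
    rw [Multiset.count_sum']
    have : ∀ m ∈ Finset.Ioc 0 M,
        (Multiset.count k' (if m % N = ((k : ℕ) + 1) % N
          then Multiset.replicate (d m - d (m + 1)) m else 0))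
        = if m = k' then d k' - d (k' + 1) else 0 := by
      intro m hm
      by_cases he : m = k'
      · subst he
        rw [if_pos hk'mod, if_pos rfl, Multiset.count_replicate, if_pos rfl]
      · split_ifs with hc
        · simp [Multiset.count_replicate, he, Ne.symm he]
        · simp
    rw [Finset.sum_congr rfl this, Finset.sum_ite_eq' (Finset.Ioc 0 M) k']
    split_ifs with hmem'
    · rfl
    · have : M < k' := by
        rw [Finset.mem_Ioc] at hmem'; omega
      have h1 : d k' = 0 := hM k' (by omega)
      have h2 : d (k' + 1) = 0 := hM (k' + 1) (by omega)
      omega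
  -- sum of conjParts
  have hsum : ∀ j, 1 ≤ j → d j = ∑ k : Fin N, conjPart (f k) j := by
    intro j hj
    have : ∀ k : Fin N, conjPart (f k) j
        = ∑ k' ∈ Finset.Ioc 0 M,
            (if k' % N = ((k : ℕ) + 1) % N then (if j ≤ k' then d k' - d (k' + 1) else 0) else 0) := by
      intro k
      rw [hf]
      simp only
      rw [conjPart_sum]
      refine Finset.sum_congr rfl fun m hm => ?_
      by_cases hc : m % N = ((k : ℕ) + 1) % N
      · rw [if_pos hc, if_pos hc, conjPart_replicate]
      · rw [if_neg hc, if_neg hc]; simp [conjPart]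
    rw [Finset.sum_congr rfl fun k _ => this k, Finset.sum_comm]
    have step : ∀ k' ∈ Finset.Ioc 0 M,
        (∑ k : Fin N, if k' % N = ((k : ℕ) + 1) % N then (if j ≤ k' then d k' - d (k' + 1) else 0) else 0)
        = if j ≤ k' then d k' - d (k' + 1) else 0 := by
      intro k' hk'
      rw [Finset.mem_Ioc] at hk'
      set k₀ : Fin N := ⟨(k' - 1) % N, Nat.mod_lt _ (by omega)⟩ with hk₀
      have hmod : k' % N = ((k₀ : ℕ) + 1) % N := by
        simp only [hk₀]
        have h2 : k' = ((k' - 1) % N + 1) + N * ((k' - 1) / N) := by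
          have := Nat.div_add_mod (k' - 1) N; omega
        conv_lhs => rw [h2]
        rw [Nat.add_mul_mod_self_left]
      rw [Finset.sum_eq_single_of_mem k₀ (Finset.mem_univ _)]
      · rw [if_pos hmod]
      · intro b _ hb
        rw [if_neg]
        intro hcon
        exact hb (Fin.ext (inj _ _ b.isLt k₀.isLt (hcon.symm.trans hmod)))
    rw [Finset.sum_congr rfl step]
    have : Finset.filter (fun k' => j ≤ k') (Finset.Ioc 0 M) = Finset.Icc j M := by
      ext x
      simp only [Finset.mem_filter, Finset.mem_Ioc, Finset.mem_Icc]
      omega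
    rw [← Finset.sum_filter, this, telescope_aux d mono j hj, hM (M + 1) (by omega)]
    have : d (M + 1) = 0 := hM _ (by omega)
    omega
  refine ⟨f, ⟨hmem, hsum⟩, hcount, ?_⟩
  -- uniqueness
  intro g ⟨hgmem, hgsum⟩
  funext k
  ext k'
  by_cases hpos : 0 < k'
  · by_cases hmod : k' % N = ((k : ℕ) + 1) % N
    · -- main case
      have key : d k' = d (k' + 1) + ∑ m : Fin N, (g m).count k' := by
        rw [hgsum k' hpos, hgsum (k' + 1) (by omega), ← Finset.sum_add_distrib]
        exact Finset.sum_congr rfl fun m _ => conjPart_succ_add _ _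
      have hzero : ∀ m : Fin N, m ≠ k → (g m).count k' = 0 := by
        intro m hm
        rw [Multiset.count_eq_zero]
        intro hcon
        have h2 := (hgmem m k' hcon).2
        exact hm (Fin.ext (inj _ _ m.isLt k.isLt (h2.symm.trans hmod)))
      rw [Finset.sum_eq_single_of_mem k (Finset.mem_univ _) (fun b _ hb => hzero b hb)] at key
      rw [hcount k k' hpos hmod]
      have := mono k' (k' + 1) hpos (by omega)
      omega
    · -- wrong residue: both counts are 0
      rw [Multiset.count_eq_zero.mpr, Multiset.count_eq_zero.mpr]
      · intro hcon; exact hmod (hmem k k' hcon).2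
      · intro hcon; exact hmod (hgmem k k' hcon).2
  · -- k' = 0
    rw [Multiset.count_eq_zero.mpr, Multiset.count_eq_zero.mpr]
    · intro hcon; exact hpos (hmem k k' hcon).1
    · intro hcon; exact hpos (hgmem k k' hcon).1
end
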